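/- Let f : ℝ^d → ℝ be differentiable, L-smooth with L > 0, and (L0, L1)-smooth with L0 > 0, L1 > 0, and suppose f attains its minimum at x* with f* = f(x*). Let l* ≤ f*, let T ≥ 1, and let x_t ∈ ℝ^d satisfy ‖∇f(x_t)‖ > L0/L1 and f(x_t) > f*. Then the Inexact Polyak Stepsize η_t = (f(x_t) − l*)/(√T · ‖∇f(x_t)‖²) satisfies η_t ≥ 1 / (4 L1 √(2 L T (f(x_t) − f*))). -/

import Mathlib

/-!
Both lower bounds on the suboptimality come from one gradient step `x - τ ∇f(x)` and the descent
lemma along the segment it sweeps out. With global `L`-smoothness and `τ = 1/L` this gives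
`‖∇f(x)‖² ≤ 2L (f(x) - f*)`. In the large-gradient regime `L0 ≤ L1 ‖∇f(x)‖`, the
`(L0, L1)`-smoothness at `x` makes the gradient `2 L1 ‖∇f(x)‖`-Lipschitz from `x` on the ball of
radius `1/L1`, and the step of length `1/(2 L1)` gives `‖∇f(x)‖ ≤ 4 L1 (f(x) - f*)`. Hence
`(f(x) - l*)/‖∇f(x)‖² ≥ 1/(4 L1 ‖∇f(x)‖) ≥ 1/(4 L1 √(2L (f(x) - f*)))`, and dividing by `√T`
gives the bound on the stepsize.
-/

open Set InnerProductSpace RealInnerProductSpace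
open scoped Gradient

section GradientStep

variable {E : Type*} [NormedAddCommGroup E] [InnerProductSpace ℝ E] [CompleteSpace E]
  {f : E → ℝ}

theorem hasDerivAt_apply_add_smul (hf : Differentiable ℝ f) (x v : E) (t : ℝ) :
    HasDerivAt (fun s : ℝ => f (x + s • v)) ⟪∇ f (x + t • v), v⟫ t := by
  have hline : HasDerivAt (fun s : ℝ => x + s • v) v t := by
    simpa using ((hasDerivAt_id t).smul_const v).const_add x
  rw [inner_gradient_left]
  exact (hf _).hasFDerivAt.comp_hasDerivAt t hline

theorem le_add_inner_gradient_add_of_norm_gradient_sub_le (hf : Differentiable ℝ f) {x v : E}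
    {C : ℝ} (hC : ∀ y ∈ segment ℝ x (x + v), ‖∇ f y - ∇ f x‖ ≤ C * ‖y - x‖) :
    f (x + v) ≤ f x + ⟪∇ f x, v⟫ + C / 2 * ‖v‖ ^ 2 := by
  set ψ : ℝ → ℝ := fun t => f (x + t • v) - t * ⟪∇ f x, v⟫ - C / 2 * t ^ 2 * ‖v‖ ^ 2
  have hψ : ∀ t, HasDerivAt ψ (⟪∇ f (x + t • v) - ∇ f x, v⟫ - C * t * ‖v‖ ^ 2) t := by
    intro t
    have hquad : HasDerivAt (fun s : ℝ => C / 2 * s ^ 2 * ‖v‖ ^ 2) (C * t * ‖v‖ ^ 2) t := by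
      refine (((hasDerivAt_pow 2 t).const_mul (C / 2)).mul_const (‖v‖ ^ 2)).congr_deriv ?_
      simp only [Nat.cast_ofNat, Nat.add_one_sub_one, pow_one]
      ring
    refine (((hasDerivAt_apply_add_smul hf x v t).sub
      ((hasDerivAt_id t).mul_const ⟪∇ f x, v⟫)).sub hquad).congr_deriv ?_
    rw [inner_sub_left, one_mul]
  have hderiv : ∀ t ∈ interior (Icc (0 : ℝ) 1), deriv ψ t ≤ 0 := by
    intro t ht
    rw [interior_Icc] at ht
    have hmem : x + t • v ∈ segment ℝ x (x + v) := by
      rw [segment_eq_image']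
      exact ⟨t, Ioo_subset_Icc_self ht, by simp⟩
    have hgrad := hC _ hmem
    rw [add_sub_cancel_left, norm_smul, Real.norm_of_nonneg ht.1.le] at hgrad
    rw [(hψ t).deriv]
    nlinarith [real_inner_le_norm (∇ f (x + t • v) - ∇ f x) v,
      mul_le_mul_of_nonneg_right hgrad (norm_nonneg v)]
  have hanti : AntitoneOn ψ (Icc 0 1) :=
    antitoneOn_of_deriv_nonpos (convex_Icc 0 1)
      (fun t _ => (hψ t).continuousAt.continuousWithinAt)
      (fun t _ => (hψ t).differentiableAt.differentiableWithinAt) hderiv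
  have h10 : ψ 1 ≤ ψ 0 := hanti (left_mem_Icc.2 zero_le_one) (right_mem_Icc.2 zero_le_one)
    zero_le_one
  simp only [ψ, one_smul, zero_smul, add_zero] at h10
  linarith

theorem le_sub_of_gradient_step (hf : Differentiable ℝ f) {m : ℝ} (hm : ∀ y, m ≤ f y) {x : E}
    {τ C : ℝ} (hC : ∀ y ∈ segment ℝ x (x - τ • ∇ f x), ‖∇ f y - ∇ f x‖ ≤ C * ‖y - x‖) :
    m ≤ f x - τ * (1 - C * τ / 2) * ‖∇ f x‖ ^ 2 := by
  rw [sub_eq_add_neg] at hC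
  have hdescent := le_add_inner_gradient_add_of_norm_gradient_sub_le hf hC
  rw [inner_neg_right, real_inner_smul_right, real_inner_self_eq_norm_sq, norm_neg, norm_smul,
    mul_pow, Real.norm_eq_abs, sq_abs] at hdescent
  linarith [hm (x + -(τ • ∇ f x))]

theorem sq_norm_gradient_le_of_lipschitz (hf : Differentiable ℝ f) {m L : ℝ} (hm : ∀ y, m ≤ f y)
    (hL : 0 < L) {x : E} (hLip : ∀ y, ‖∇ f y - ∇ f x‖ ≤ L * ‖y - x‖) :
    ‖∇ f x‖ ^ 2 ≤ 2 * L * (f x - m) := by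
  have hstep := le_sub_of_gradient_step hf hm (τ := 1 / L) fun y _ => hLip y
  have hτ : 1 / L * (1 - L * (1 / L) / 2) = 1 / (2 * L) := by field_simp; ring
  rw [hτ] at hstep
  calc ‖∇ f x‖ ^ 2 = 2 * L * (1 / (2 * L) * ‖∇ f x‖ ^ 2) := by field_simp
    _ ≤ 2 * L * (f x - m) := by gcongr; linarith

theorem norm_gradient_le_of_L0L1_smooth (hf : Differentiable ℝ f) {m L0 L1 : ℝ}
    (hm : ∀ y, m ≤ f y) (hL1 : 0 < L1) {x : E} (hlarge : L0 ≤ L1 * ‖∇ f x‖)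
    (hsmooth : ∀ y, ‖x - y‖ ≤ 1 / L1 →
      ‖∇ f x - ∇ f y‖ ≤ (L0 + L1 * ‖∇ f x‖) * ‖x - y‖) :
    ‖∇ f x‖ ≤ 4 * L1 * (f x - m) := by
  rcases (norm_nonneg (∇ f x)).eq_or_lt with hG | hG
  · rw [← hG]
    exact mul_nonneg (by positivity) (sub_nonneg.2 (hm x))
  have hstep := le_sub_of_gradient_step hf hm (τ := 1 / (2 * L1 * ‖∇ f x‖))
    (C := 2 * L1 * ‖∇ f x‖) fun y hy => by
      have hdist : ‖y - x‖ ≤ 1 / (2 * L1) := by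
        refine (norm_sub_le_of_mem_segment hy).trans_eq ?_
        rw [sub_sub_cancel_left, norm_neg, norm_smul, Real.norm_of_nonneg (by positivity)]
        field_simp
      have hdist' : ‖x - y‖ ≤ 1 / L1 := by
        rw [norm_sub_rev]
        exact hdist.trans (by gcongr; linarith)
      rw [norm_sub_rev, norm_sub_rev y]
      exact (hsmooth y hdist').trans (by gcongr; linarith)
  have hτ : 1 / (2 * L1 * ‖∇ f x‖) * (1 - 2 * L1 * ‖∇ f x‖ * (1 / (2 * L1 * ‖∇ f x‖)) / 2)
      * ‖∇ f x‖ ^ 2 = ‖∇ f x‖ / (4 * L1) := by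
    field_simp
    ring
  rw [hτ] at hstep
  calc ‖∇ f x‖ = 4 * L1 * (‖∇ f x‖ / (4 * L1)) := by field_simp
    _ ≤ 4 * L1 * (f x - m) := by gcongr; linarith

end GradientStep

theorem inexact_polyak_stepsize_lower_bound_large_gradient_general {d : ℕ}
    (f : EuclideanSpace ℝ (Fin d) → ℝ) (L L0 L1 : ℝ)
    (hL : 0 < L) (hL0 : 0 < L0) (hL1 : 0 < L1)
    (hdiff : Differentiable ℝ f)
    (hLsmooth : ∀ x y : EuclideanSpace ℝ (Fin d),
      ‖gradient f x - gradient f y‖ ≤ L * ‖x - y‖)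
    (hsmooth : ∀ x y : EuclideanSpace ℝ (Fin d), ‖x - y‖ ≤ 1 / L1 →
      ‖gradient f x - gradient f y‖ ≤ (L0 + L1 * ‖gradient f x‖) * ‖x - y‖)
    (xstar : EuclideanSpace ℝ (Fin d)) (hmin : ∀ y, f xstar ≤ f y)
    (lstar : ℝ) (hlstar : lstar ≤ f xstar)
    (T : ℕ)
    (xt : EuclideanSpace ℝ (Fin d))
    (hlarge : ‖gradient f xt‖ > L0 / L1)
    (η : ℝ) (hη : η = (f xt - lstar) / (Real.sqrt T * ‖gradient f xt‖ ^ 2)) :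
    η ≥ 1 / (4 * L1 * Real.sqrt (2 * L * T * (f xt - f xstar))) := by
  set G := ‖gradient f xt‖
  set Δ := f xt - f xstar
  have hG : 0 < G := (div_pos hL0 hL1).trans hlarge
  have hsq : G ^ 2 ≤ 2 * L * Δ :=
    sq_norm_gradient_le_of_lipschitz hdiff hmin hL fun y => hLsmooth y xt
  have hlin : G ≤ 4 * L1 * Δ :=
    norm_gradient_le_of_L0L1_smooth hdiff hmin hL1 ((div_lt_iff₀' hL1).1 hlarge).le (hsmooth xt)
  have hG_le : G ≤ Real.sqrt (2 * L * Δ) := Real.le_sqrt_of_sq_le hsq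
  have hbound : 1 / (4 * L1 * Real.sqrt (2 * L * Δ)) ≤ (f xt - lstar) / G ^ 2 :=
    calc 1 / (4 * L1 * Real.sqrt (2 * L * Δ)) ≤ 1 / (4 * L1 * G) := by gcongr
      _ = G / (4 * L1) / G ^ 2 := by field_simp
      _ ≤ Δ / G ^ 2 := by gcongr; exact (div_le_iff₀' (by positivity)).2 hlin
      _ ≤ (f xt - lstar) / G ^ 2 := by gcongr; linarith
  have hsplit : Real.sqrt (2 * L * T * Δ) = Real.sqrt T * Real.sqrt (2 * L * Δ) := by
    rw [← Real.sqrt_mul (Nat.cast_nonneg T)]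
    ring_nf
  rw [ge_iff_le, hη, hsplit]
  calc 1 / (4 * L1 * (Real.sqrt T * Real.sqrt (2 * L * Δ)))
      = 1 / Real.sqrt T * (1 / (4 * L1 * Real.sqrt (2 * L * Δ))) := by ring
    _ ≤ 1 / Real.sqrt T * ((f xt - lstar) / G ^ 2) := by gcongr
    _ = (f xt - lstar) / (Real.sqrt T * G ^ 2) := by ring

/-- In the large-gradient regime `‖∇f(x_t)‖ > L0/L1`, the Inexact Polyak
Stepsize satisfies `η_t ≥ 1/(4L1 √(2LT(f(x_t) − f*)))`. -/
theorem inexact_polyak_stepsize_lower_bound_large_gradient {d : ℕ}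
    (f : EuclideanSpace ℝ (Fin d) → ℝ) (L L0 L1 : ℝ)
    (hL : 0 < L) (hL0 : 0 < L0) (hL1 : 0 < L1)
    (hdiff : Differentiable ℝ f)
    (hLsmooth : ∀ x y : EuclideanSpace ℝ (Fin d),
      ‖gradient f x - gradient f y‖ ≤ L * ‖x - y‖)
    (hsmooth : ∀ x y : EuclideanSpace ℝ (Fin d), ‖x - y‖ ≤ 1 / L1 →
      ‖gradient f x - gradient f y‖ ≤ (L0 + L1 * ‖gradient f x‖) * ‖x - y‖)
    (xstar : EuclideanSpace ℝ (Fin d)) (hmin : ∀ y, f xstar ≤ f y)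
    (lstar : ℝ) (hlstar : lstar ≤ f xstar)
    (T : ℕ) (hT : 1 ≤ T)
    (xt : EuclideanSpace ℝ (Fin d))
    (hlarge : ‖gradient f xt‖ > L0 / L1)
    (hgt : f xt > f xstar)
    (η : ℝ) (hη : η = (f xt - lstar) / (Real.sqrt T * ‖gradient f xt‖ ^ 2)) :
    η ≥ 1 / (4 * L1 * Real.sqrt (2 * L * T * (f xt - f xstar))) :=
  inexact_polyak_stepsize_lower_bound_large_gradient_general f L L0 L1 hL hL0 hL1 hdiff hLsmooth
    hsmooth xstar hmin lstar hlstar T xt hlarge η hη
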